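/- arXiv:2011.11149 — 2 statements merged into one kernel-verified Lean document; each statement's English description precedes it below -/
import Mathlib

section
/- Let (E,F) be a resistance form on a set X with associated resistance metric R. Assume every f ∈ F is continuous on (X,R), (X,R) is separable, and diam_R(X) = sup_{x,y∈X} R(x,y) ≤ D < ∞. Let ν be a Borel probability measure on (X,R), let α > 0, and let u : X × X → ℝ be a symmetric function (u(x,y) = u(y,x)) such that u(x,·) ∈ F for every x ∈ X and E(u(x,·), f) + α·∫_X u(x,y)·f(y) dν(y) = f(x) for all f ∈ F and all x ∈ X. Then there exists a constant c, depending only on α and D, such that |u(x,y)| ≤ c for all x,y ∈ X, and |u(x_1,y_1) − u(x_2,y_2)| ≤ c·(R(x_1,x_2)^{1/2} + R(y_1,y_2)^{1/2}) for all x_1,x_2,y_1,y_2 ∈ X. -/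
open Filter Topology MeasureTheory

/-- A resistance form `(E, F)` on a set `X` in the sense of Kigami.
`dom` models the domain `F ⊆ l(X)` and `en` models the bilinear form `E`
(its values outside `dom × dom` are irrelevant). -/
structure ResistanceForm (X : Type*) where
  dom : Set (X → ℝ)
  en : (X → ℝ) → (X → ℝ) → ℝ
  dom_const : ∀ a : ℝ, (fun _ => a) ∈ dom
  dom_add : ∀ f g, f ∈ dom → g ∈ dom → f + g ∈ dom
  dom_smul : ∀ (a : ℝ) f, f ∈ dom → a • f ∈ dom
  symm : ∀ f g, en f g = en g f
  add_left : ∀ f g h, f ∈ dom → g ∈ dom → h ∈ dom →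
    en (f + g) h = en f h + en g h
  smul_left : ∀ (a : ℝ) f g, f ∈ dom → g ∈ dom → en (a • f) g = a * en f g
  nonneg : ∀ f, f ∈ dom → 0 ≤ en f f
  /-- (RF1): `E(f,f) = 0` iff `f` is constant. -/
  en_eq_zero_iff : ∀ f, f ∈ dom → (en f f = 0 ↔ ∃ a : ℝ, ∀ x, f x = a)
  /-- (RF2): the quotient of `dom` by constants is complete in the `E`-norm. -/
  complete : ∀ u : ℕ → X → ℝ, (∀ n, u n ∈ dom) →
    (∀ ε > (0:ℝ), ∃ N, ∀ m ≥ N, ∀ n ≥ N, en (u m - u n) (u m - u n) < ε) →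
    ∃ v ∈ dom, Tendsto (fun n => en (u n - v) (u n - v)) atTop (𝓝 0)
  /-- (RF3): finite sets admit arbitrary extensions. -/
  exten : ∀ (V : Finset X) (u : X → ℝ), ∃ f ∈ dom, ∀ x ∈ V, f x = u x
  /-- (RF4): the effective resistance between any two points is finite. -/
  resist_fin : ∀ x y : X, ∃ C : ℝ, ∀ f ∈ dom, (f x - f y) ^ 2 ≤ C * en f f
  /-- (RF5): the Markov property. -/
  markov : ∀ f ∈ dom, (fun x => min (max (f x) 0) 1) ∈ dom ∧
    en (fun x => min (max (f x) 0) 1) (fun x => min (max (f x) 0) 1) ≤ en f f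

lemma en_const_right {X : Type*} (RF : ResistanceForm X) (f : X → ℝ) (hf : f ∈ RF.dom)
    (a : ℝ) : RF.en f (fun _ => a) = 0 := by
  set g : X → ℝ := fun _ => a with hgdef
  have hgd : g ∈ RF.dom := RF.dom_const a
  have hgg : RF.en g g = 0 := (RF.en_eq_zero_iff g hgd).2 ⟨a, fun _ => rfl⟩
  by_contra hs0
  set s := RF.en f g with hsdef
  have hs : s ≠ 0 := hs0
  set t : ℝ := -(RF.en f f + 1)/(2*s) with htdef
  have htg : t • g ∈ RF.dom := RF.dom_smul t g hgd
  have hfg : f + t • g ∈ RF.dom := RF.dom_add _ _ hf htg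
  have e1 : RF.en (f + t • g) (f + t • g) = RF.en f (f + t • g) + RF.en (t • g) (f + t • g) :=
    RF.add_left f (t • g) (f + t • g) hf htg hfg
  have e2 : RF.en (f + t • g) f = RF.en f f + RF.en (t • g) f :=
    RF.add_left f (t • g) f hf htg hf
  have e3 : RF.en (f + t • g) g = RF.en f g + RF.en (t • g) g :=
    RF.add_left f (t • g) g hf htg hgd
  have e4 : RF.en (t • g) f = t * RF.en g f := RF.smul_left t g f hgd hf
  have e5 : RF.en (t • g) g = t * RF.en g g := RF.smul_left t g g hgd hgd
  have e6 : RF.en (t • g) (f + t • g) = t * RF.en g (f + t • g) :=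
    RF.smul_left t g _ hgd hfg
  have h1 : RF.en (f + t • g) (f + t • g) = RF.en f f + 2*(t*s) := by
    rw [e1, e6, RF.symm f (f + t • g), e2, RF.symm g (f + t • g), e3, e4, e5, hgg,
      RF.symm g f, ← hsdef]
    ring
  have hts : t * s = -(RF.en f f + 1)/2 := by
    rw [htdef]; field_simp
  have hnn := RF.nonneg _ hfg
  rw [h1, hts] at hnn
  linarith

lemma resist_bound {X : Type*} [MetricSpace X] (RF : ResistanceForm X)
    (hlub : ∀ x y : X, x ≠ y → IsLUB {t : ℝ | ∃ f ∈ RF.dom, 0 < RF.en f f ∧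
      t = (f x - f y) ^ 2 / RF.en f f} (dist x y))
    (f : X → ℝ) (hf : f ∈ RF.dom) (x y : X) :
    (f x - f y) ^ 2 ≤ dist x y * RF.en f f := by
  rcases eq_or_ne x y with rfl | hxy
  · simp
  rcases eq_or_lt_of_le (RF.nonneg f hf) with h0 | hpos
  · obtain ⟨a, ha⟩ := (RF.en_eq_zero_iff f hf).1 h0.symm
    rw [ha x, ha y, ← h0, mul_zero]; simp
  · have hmem : (f x - f y) ^ 2 / RF.en f f ∈ {t : ℝ | ∃ f ∈ RF.dom, 0 < RF.en f f ∧
        t = (f x - f y) ^ 2 / RF.en f f} := ⟨f, hf, hpos, rfl⟩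
    have hle := (hlub x y hxy).1 hmem
    rw [div_le_iff₀ hpos] at hle
    linarith

/-- Uniform bound and Hölder continuity (with respect to the
square root of the resistance metric) for resolvent kernels: there is a
constant `c`, depending only on `α` and on a bound `D` for the resistance
diameter, such that for any separable metric space `X` whose distance is the
resistance metric of a resistance form `(E, F)` with continuous domain, any
Borel probability measure `ν` on `X` and any symmetric resolvent kernel `u`
(i.e. `E(u(x,·), f) + α ∫ u(x,y) f(y) dν(y) = f(x)` for all `f ∈ F`), one has
`|u| ≤ c` and `|u(x₁,y₁) − u(x₂,y₂)| ≤ c (R(x₁,x₂)^{1/2} + R(y₁,y₂)^{1/2})`. -/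
theorem stmt8 (α D : ℝ) (hα : 0 < α) :
    ∃ c : ℝ,
      ∀ (X : Type) [MetricSpace X] [TopologicalSpace.SeparableSpace X]
        [MeasurableSpace X] [BorelSpace X]
        (RF : ResistanceForm X),
        (∀ f ∈ RF.dom, Continuous f) →
        (∀ x y : X, x ≠ y →
          IsLUB {t : ℝ | ∃ f ∈ RF.dom, 0 < RF.en f f ∧
            t = (f x - f y) ^ 2 / RF.en f f} (dist x y)) →
        (∀ x y : X, dist x y ≤ D) →
        ∀ ν : Measure X, IsProbabilityMeasure ν →
        ∀ u : X → X → ℝ,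
          (∀ x y, u x y = u y x) →
          (∀ x, u x ∈ RF.dom) →
          (∀ x, ∀ f ∈ RF.dom, RF.en (u x) f + α * ∫ y, u x y * f y ∂ν = f x) →
          (∀ x y, |u x y| ≤ c) ∧
          ∀ x₁ x₂ y₁ y₂ : X, |u x₁ y₁ - u x₂ y₂| ≤
            c * (Real.sqrt (dist x₁ x₂) + Real.sqrt (dist y₁ y₂)) := by
  set D' : ℝ := max D 0 with hD'def
  have hD'0 : (0:ℝ) ≤ D' := le_max_right _ _
  set M : ℝ := 2/α + D' with hMdef
  have hM0 : 0 < M := by positivity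
  refine ⟨M + Real.sqrt (D' * M) + Real.sqrt M, ?_⟩
  intro X _ _ _ _ RF hcont hlub hDbd ν hν u husymm hudom hres
  have hdist : ∀ x y : X, dist x y ≤ D' := fun x y => le_trans (hDbd x y) (le_max_left _ _)
  have hrb : ∀ f ∈ RF.dom, ∀ x y : X, (f x - f y) ^ 2 ≤ D' * RF.en f f := by
    intro f hf x y
    have h1 := resist_bound RF hlub f hf x y
    have h2 : dist x y * RF.en f f ≤ D' * RF.en f f :=
      mul_le_mul_of_nonneg_right (hdist x y) (RF.nonneg f hf)
    linarith
  -- key bound: u x x ≤ M and en (u x) (u x) ≤ u x x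
  have hkey : ∀ x : X, 0 ≤ u x x ∧ RF.en (u x) (u x) ≤ u x x ∧ u x x ≤ M := by
    intro x
    have hux := hudom x
    have he0 : 0 ≤ RF.en (u x) (u x) := RF.nonneg _ hux
    have eq2 := hres x (u x) hux
    have hI2 : 0 ≤ ∫ y, u x y * u x y ∂ν := integral_nonneg fun y => mul_self_nonneg _
    have ht0 : 0 ≤ u x x := by nlinarith
    have het : RF.en (u x) (u x) ≤ u x x := by nlinarith
    refine ⟨ht0, het, ?_⟩
    -- ∫ u x = 1/α
    have eq1 := hres x (fun _ => (1:ℝ)) (RF.dom_const 1)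
    rw [en_const_right RF (u x) hux 1] at eq1
    simp only [mul_one, zero_add] at eq1
    have hInt1 : ∫ y, u x y ∂ν = 1/α := by
      field_simp
      linarith
    -- pointwise bound
    set e := RF.en (u x) (u x) with hedef
    have hpt : ∀ y : X, |u x y - u x x| ≤ Real.sqrt (D' * e) := by
      intro y
      have h1 : (u x y - u x x) ^ 2 ≤ D' * e := hrb (u x) hux y x
      calc |u x y - u x x| = Real.sqrt ((u x y - u x x) ^ 2) := (Real.sqrt_sq_eq_abs _).symm
        _ ≤ Real.sqrt (D' * e) := Real.sqrt_le_sqrt h1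
    -- integrability
    have hbdd : ∀ y : X, ‖u x y‖ ≤ u x x + Real.sqrt (D' * e) := by
      intro y
      have := hpt y
      have h2 := abs_sub_abs_le_abs_sub (u x y) (u x x)
      rw [Real.norm_eq_abs]
      have : |u x y| ≤ |u x x| + |u x y - u x x| := by
        have := abs_sub (u x y) (u x x); nlinarith [abs_nonneg (u x y - u x x),
          abs_sub_abs_le_abs_sub (u x y) (u x x), abs_of_nonneg ht0]
      rw [abs_of_nonneg ht0] at this
      linarith [hpt y]
    have hint : Integrable (u x) ν :=
      (integrable_const (u x x + Real.sqrt (D' * e))).mono'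
        ((hcont (u x) hux).aestronglyMeasurable) (ae_of_all _ hbdd)
    have hlow : u x x - Real.sqrt (D' * e) ≤ ∫ y, u x y ∂ν := by
      have hmono := integral_mono (μ := ν)
        (integrable_const (u x x - Real.sqrt (D' * e))) hint
        (fun y => by have := hpt y; have := abs_le.1 (hpt y); linarith [this.2])
      simpa using hmono
    rw [hInt1] at hlow
    -- AM-GM finish
    have hsq : Real.sqrt (D' * e) ≤ Real.sqrt (D' * u x x) :=
      Real.sqrt_le_sqrt (mul_le_mul_of_nonneg_left het hD'0)
    set s := Real.sqrt (D' * u x x) with hsdef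
    have hs_le : s ≤ (D' + u x x)/2 := by
      have h1 : D' * u x x ≤ ((D' + u x x)/2) ^ 2 := by nlinarith [sq_nonneg (D' - u x x)]
      calc s ≤ Real.sqrt (((D' + u x x)/2) ^ 2) := Real.sqrt_le_sqrt h1
        _ = (D' + u x x)/2 := Real.sqrt_sq (by positivity)
    have h2 : u x x ≤ 1/α + s := by linarith
    rw [hMdef]
    have hα' : 1/α ≤ 2/α - 1/α := by rw [div_sub_div_same]; norm_num
    linarith
  have henM : ∀ x : X, RF.en (u x) (u x) ≤ M := fun x =>
    le_trans (hkey x).2.1 (hkey x).2.2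
  -- Hölder-type one-variable bound
  have hhold : ∀ x y₁ y₂ : X, |u x y₁ - u x y₂| ≤ Real.sqrt M * Real.sqrt (dist y₁ y₂) := by
    intro x y₁ y₂
    have h1 := resist_bound RF hlub (u x) (hudom x) y₁ y₂
    have h2 : (u x y₁ - u x y₂) ^ 2 ≤ dist y₁ y₂ * M := by
      have := mul_le_mul_of_nonneg_left (henM x) (dist_nonneg (x := y₁) (y := y₂))
      linarith
    calc |u x y₁ - u x y₂| = Real.sqrt ((u x y₁ - u x y₂) ^ 2) := (Real.sqrt_sq_eq_abs _).symm
      _ ≤ Real.sqrt (dist y₁ y₂ * M) := Real.sqrt_le_sqrt h2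
      _ = Real.sqrt (dist y₁ y₂) * Real.sqrt M := Real.sqrt_mul dist_nonneg M
      _ = Real.sqrt M * Real.sqrt (dist y₁ y₂) := mul_comm _ _
  constructor
  · intro x y
    have h1 : (u x y - u x x) ^ 2 ≤ D' * RF.en (u x) (u x) := hrb (u x) (hudom x) y x
    have h2 : D' * RF.en (u x) (u x) ≤ D' * M := mul_le_mul_of_nonneg_left (henM x) hD'0
    have h3 : |u x y - u x x| ≤ Real.sqrt (D' * M) := by
      calc |u x y - u x x| = Real.sqrt ((u x y - u x x) ^ 2) := (Real.sqrt_sq_eq_abs _).symm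
        _ ≤ Real.sqrt (D' * M) := Real.sqrt_le_sqrt (le_trans h1 h2)
    have h4 := abs_le.1 h3
    have h5 := (hkey x).1
    have h6 := (hkey x).2.2
    have h7 : (0:ℝ) ≤ Real.sqrt M := Real.sqrt_nonneg _
    rw [abs_le]
    constructor <;> nlinarith
  · intro x₁ x₂ y₁ y₂
    have h1 := hhold x₁ y₁ y₂
    have h2 : |u x₁ y₂ - u x₂ y₂| ≤ Real.sqrt M * Real.sqrt (dist x₁ x₂) := by
      rw [husymm x₁ y₂, husymm x₂ y₂]
      exact hhold y₂ x₁ x₂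
    have h3 : |u x₁ y₁ - u x₂ y₂| ≤ |u x₁ y₁ - u x₁ y₂| + |u x₁ y₂ - u x₂ y₂| := by
      have := abs_sub_le (u x₁ y₁) (u x₁ y₂) (u x₂ y₂); linarith
    have hc1 : Real.sqrt M ≤ M + Real.sqrt (D' * M) + Real.sqrt M := by
      have := Real.sqrt_nonneg (D' * M); linarith
    have hs1 : (0:ℝ) ≤ Real.sqrt (dist x₁ x₂) := Real.sqrt_nonneg _
    have hs2 : (0:ℝ) ≤ Real.sqrt (dist y₁ y₂) := Real.sqrt_nonneg _
    have hsM : (0:ℝ) ≤ Real.sqrt M := Real.sqrt_nonneg _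
    nlinarith [mul_le_mul_of_nonneg_right hc1 hs1, mul_le_mul_of_nonneg_right hc1 hs2]
end

section
/- For every word w ∈ W_* = ⋃_{m≥0} {1,2,3,4}^m, all λ_1, λ_2 ∈ (0,1/2), and every nonempty closed set A ⊆ ▲, one has δ(F_{w,λ_1}(A), F_{w,λ_2}(A)) ≤ 2|λ_1 − λ_2|, where δ denotes the Hausdorff distance on nonempty compact subsets of ℝ². In particular, |F_{w,λ_1}(p_i) − F_{w,λ_2}(p_i)| ≤ 2|λ_1 − λ_2| for i = 1,2,3. -/
open Filter Topology

noncomputable section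

/-- The Euclidean plane. -/
abbrev E2 : Type := EuclideanSpace ℝ (Fin 2)

/-- The point of the Euclidean plane with coordinates `(a, b)`. -/
def e2 (a b : ℝ) : E2 := (WithLp.equiv 2 (Fin 2 → ℝ)).symm ![a, b]

/-- The vertices `p₁ = (1/2, √3/2)`, `p₂ = (0,0)`, `p₃ = (1,0)` of the
equilateral triangle (indexed by `0, 1, 2`). -/
def pt : Fin 3 → E2 :=
  ![e2 (1 / 2) (Real.sqrt 3 / 2), e2 0 0, e2 1 0]

/-- The map `F_{4,λ}`: the orientation-preserving similarity of the plane
sending `p₁, p₂, p₃` to `(1/4+λ, √3/4)`, `(1/2−λ/2, √3 λ/2)`,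
`(3/4−λ/2, √3/4−√3 λ/2)` respectively; in complex coordinates it is
`z ↦ a z + b` with `a = 1/4 + i √3 (1/4 − λ)`, `b = (1/2 − λ/2) + i √3 λ/2`. -/
def F4 (lam : ℝ) (x : E2) : E2 :=
  e2 ((1 / 4) * x 0 - Real.sqrt 3 * (1 / 4 - lam) * x 1 + (1 / 2 - lam / 2))
     (Real.sqrt 3 * (1 / 4 - lam) * x 0 + (1 / 4) * x 1 + Real.sqrt 3 * lam / 2)

/-- The four maps of the iterated function system of `AG_λ`:
`F_{i,λ}(x) = (x + p_i)/2` for `i = 0,1,2` and `F_{3,λ} = F_{4,λ}`. -/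
def Fmap (lam : ℝ) : Fin 4 → E2 → E2 :=
  ![fun x => (2⁻¹ : ℝ) • (x + pt 0),
    fun x => (2⁻¹ : ℝ) • (x + pt 1),
    fun x => (2⁻¹ : ℝ) • (x + pt 2),
    F4 lam]

/-- Rotation by `2π/3` about the centroid `(1/2, √3/6)` of the triangle;
it generates the symmetry group `G` (of order 3) of rotations acting as `A₃`
on `{p₁, p₂, p₃}`. -/
def rot3 (x : E2) : E2 :=
  e2 (-(1 / 2) * (x 0 - 1 / 2) - (Real.sqrt 3 / 2) * (x 1 - Real.sqrt 3 / 6) + 1 / 2)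
     ((Real.sqrt 3 / 2) * (x 0 - 1 / 2) - (1 / 2) * (x 1 - Real.sqrt 3 / 6) + Real.sqrt 3 / 6)

/-- The closed triangle `▲` with vertices `p₁, p₂, p₃`. -/
def Tri : Set E2 := convexHull ℝ {pt 0, pt 1, pt 2}

/-- `K` is the attractor `AG_λ` of the iterated function system `{F_{i,λ}}`,
i.e. the unique nonempty compact set with `K = ⋃ᵢ F_{i,λ}(K)`. -/
def IsAG (lam : ℝ) (K : Set E2) : Prop :=
  K.Nonempty ∧ IsCompact K ∧ K = ⋃ i : Fin 4, Fmap lam i '' K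


/-- The composition `F_{w,λ} = F_{w₁,λ} ∘ ⋯ ∘ F_{w_m,λ}` for a word
`w ∈ W_* = ⋃_m {1,2,3,4}^m` (with `F_{∅,λ} = id`). -/
def Fword (lam : ℝ) : List (Fin 4) → E2 → E2
  | [] => id
  | i :: w => Fmap lam i ∘ Fword lam w

end

/-!
For `λ ∈ [0, 1/2]` every `F_{i,λ}` is a similarity of ratio at most `1/2` mapping the circumdisk
`D` of `▲` (centre the centroid `c`, radius `1/√3`) into itself: the first three maps are midpoint
maps towards vertices of `▲`, and `F_{4,λ}` fixes `c`. In complex coordinates centred at `c`,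
`F_{4,λ}` is multiplication by `1/4 + i√3(1/4 − λ)`, so on `D` the maps `F_{4,λ₁}` and `F_{4,λ₂}`
differ by at most `√3|λ₁ − λ₂| · (1/√3) = |λ₁ − λ₂|`. Hence, on `D`, the distance `d_w` between
`F_{w,λ₁}` and `F_{w,λ₂}` satisfies `d_{iw} ≤ d_w / 2 + |λ₁ − λ₂|`, so `d_w ≤ 2|λ₁ − λ₂|`.
-/

open Set Metric

theorem hausdorffDist_image_le_of_dist_le {X Y : Type*} [PseudoMetricSpace Y] {f g : X → Y}
    {s : Set X} {r : ℝ} (hr : 0 ≤ r) (h : ∀ x ∈ s, dist (f x) (g x) ≤ r) :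
    hausdorffDist (f '' s) (g '' s) ≤ r := by
  refine hausdorffDist_le_of_mem_dist hr ?_ ?_
  · rintro _ ⟨x, hx, rfl⟩
    exact ⟨g x, mem_image_of_mem g hx, h x hx⟩
  · rintro _ ⟨x, hx, rfl⟩
    exact ⟨f x, mem_image_of_mem f hx, dist_comm (g x) (f x) ▸ h x hx⟩

section HalfAdd

variable {V : Type*} [NormedAddCommGroup V] [NormedSpace ℝ V]

theorem dist_half_add_half_add (p x y : V) :
    dist ((2⁻¹ : ℝ) • (x + p)) ((2⁻¹ : ℝ) • (y + p)) = dist x y / 2 := by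
  rw [dist_smul₀, dist_add_right, Real.norm_of_nonneg (by norm_num), inv_mul_eq_div]

theorem Convex.mapsTo_half_add {s : Set V} (hs : Convex ℝ s) {p : V} (hp : p ∈ s) :
    MapsTo (fun x => (2⁻¹ : ℝ) • (x + p)) s s := fun _ hx => by
  simpa only [smul_add] using hs hx hp (by norm_num) (by norm_num) (by norm_num)

end HalfAdd

@[simp] theorem e2_apply_zero (a b : ℝ) : e2 a b 0 = a := rfl

@[simp] theorem e2_apply_one (a b : ℝ) : e2 a b 1 = b := rfl

theorem dist_sq_E2 (x y : E2) : dist x y ^ 2 = (x 0 - y 0) ^ 2 + (x 1 - y 1) ^ 2 := by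
  rw [EuclideanSpace.dist_eq, Real.sq_sqrt (by positivity)]
  simp [Fin.sum_univ_two, Real.dist_eq, sq_abs]

theorem sq_sqrt_three : Real.sqrt 3 ^ 2 = 3 := Real.sq_sqrt (by norm_num)

noncomputable def triCentroid : E2 := e2 (1 / 2) (Real.sqrt 3 / 6)

noncomputable def circumradius : ℝ := Real.sqrt 3 / 3

def circumdisk : Set E2 := closedBall triCentroid circumradius

theorem circumradius_sq : circumradius ^ 2 = 1 / 3 := by
  rw [circumradius, div_pow, sq_sqrt_three]; norm_num

theorem dist_pt_triCentroid (i : Fin 3) : dist (pt i) triCentroid = circumradius := by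
  refine (pow_left_inj₀ dist_nonneg (by unfold circumradius; positivity) two_ne_zero).1 ?_
  rw [circumradius_sq, dist_sq_E2]
  fin_cases i <;> simp [pt, triCentroid] <;> ring_nf <;> rw [sq_sqrt_three] <;> norm_num

theorem pt_mem_circumdisk (i : Fin 3) : pt i ∈ circumdisk :=
  (dist_pt_triCentroid i).le

theorem Tri_subset_circumdisk : Tri ⊆ circumdisk :=
  convexHull_min (by rintro _ (rfl | rfl | rfl) <;> exact pt_mem_circumdisk _)
    (convex_closedBall _ _)

section F4

theorem F4_triCentroid (lam : ℝ) : F4 lam triCentroid = triCentroid := by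
  simp only [F4, triCentroid, e2_apply_zero, e2_apply_one]
  congr 1
  · linear_combination (lam - 1 / 4) / 6 * sq_sqrt_three
  · ring

theorem dist_F4_sq (lam : ℝ) (x y : E2) :
    dist (F4 lam x) (F4 lam y) ^ 2 = (1 / 16 + 3 * (1 / 4 - lam) ^ 2) * dist x y ^ 2 := by
  rw [dist_sq_E2, dist_sq_E2]
  simp only [F4, e2_apply_zero, e2_apply_one]
  linear_combination ((1 / 4 - lam) * (x 1 - y 1)) ^ 2 * sq_sqrt_three +
    ((1 / 4 - lam) * (x 0 - y 0)) ^ 2 * sq_sqrt_three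

theorem dist_F4_F4_sq (lam₁ lam₂ : ℝ) (x : E2) :
    dist (F4 lam₁ x) (F4 lam₂ x) ^ 2 = 3 * (lam₁ - lam₂) ^ 2 * dist x triCentroid ^ 2 := by
  rw [dist_sq_E2, dist_sq_E2]
  simp only [F4, triCentroid, e2_apply_zero, e2_apply_one]
  linear_combination (lam₁ - lam₂) ^ 2 * (x 1 ^ 2 + (x 0 - 1 / 2) ^ 2 - 1 / 12) * sq_sqrt_three

variable {lam : ℝ}

theorem dist_F4_le (hl : lam ∈ Icc (0 : ℝ) (1 / 2)) (x y : E2) :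
    dist (F4 lam x) (F4 lam y) ≤ dist x y / 2 := by
  refine (pow_le_pow_iff_left₀ dist_nonneg (by positivity) two_ne_zero).1 ?_
  rw [dist_F4_sq, div_pow]
  have : (1 / 4 - lam) ^ 2 ≤ 1 / 16 := by nlinarith [hl.1, hl.2]
  nlinarith [sq_nonneg (dist x y)]

theorem mapsTo_F4 (hl : lam ∈ Icc (0 : ℝ) (1 / 2)) : MapsTo (F4 lam) circumdisk circumdisk :=
  fun x hx => calc
    dist (F4 lam x) triCentroid = dist (F4 lam x) (F4 lam triCentroid) := by
      rw [F4_triCentroid]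
    _ ≤ dist x triCentroid / 2 := dist_F4_le hl x triCentroid
    _ ≤ circumradius := by
      have : (0 : ℝ) ≤ dist x triCentroid := dist_nonneg
      linarith [mem_closedBall.1 hx]

theorem dist_F4_F4_le (lam₁ lam₂ : ℝ) {x : E2} (hx : x ∈ circumdisk) :
    dist (F4 lam₁ x) (F4 lam₂ x) ≤ |lam₁ - lam₂| := by
  refine (pow_le_pow_iff_left₀ dist_nonneg (abs_nonneg _) two_ne_zero).1 ?_
  have hx2 : dist x triCentroid ^ 2 ≤ 1 / 3 :=
    circumradius_sq ▸ pow_le_pow_left₀ dist_nonneg hx 2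
  rw [dist_F4_F4_sq, sq_abs]
  nlinarith [sq_nonneg (lam₁ - lam₂)]

end F4

section Fmap

theorem Fmap_castSucc (lam : ℝ) (j : Fin 3) :
    Fmap lam j.castSucc = fun x => (2⁻¹ : ℝ) • (x + pt j) := by
  fin_cases j <;> rfl

theorem Fmap_last (lam : ℝ) : Fmap lam (Fin.last 3) = F4 lam := rfl

variable {lam : ℝ}

theorem mapsTo_Fmap (hl : lam ∈ Icc (0 : ℝ) (1 / 2)) (i : Fin 4) :
    MapsTo (Fmap lam i) circumdisk circumdisk := by
  induction i using Fin.lastCases with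
  | last => exact mapsTo_F4 hl
  | cast j =>
    rw [Fmap_castSucc]
    exact (convex_closedBall _ _).mapsTo_half_add (pt_mem_circumdisk j)

theorem dist_Fmap_le (hl : lam ∈ Icc (0 : ℝ) (1 / 2)) (i : Fin 4) (x y : E2) :
    dist (Fmap lam i x) (Fmap lam i y) ≤ dist x y / 2 := by
  induction i using Fin.lastCases with
  | last => exact dist_F4_le hl x y
  | cast j =>
    rw [Fmap_castSucc]
    exact (dist_half_add_half_add (pt j) x y).le

theorem dist_Fmap_Fmap_le (lam₁ lam₂ : ℝ) (i : Fin 4) {x : E2} (hx : x ∈ circumdisk) :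
    dist (Fmap lam₁ i x) (Fmap lam₂ i x) ≤ |lam₁ - lam₂| := by
  induction i using Fin.lastCases with
  | last => exact dist_F4_F4_le lam₁ lam₂ hx
  | cast j => simp only [Fmap_castSucc, dist_self, abs_nonneg]

theorem mapsTo_Fword (hl : lam ∈ Icc (0 : ℝ) (1 / 2)) (w : List (Fin 4)) :
    MapsTo (Fword lam w) circumdisk circumdisk := by
  induction w with
  | nil => exact mapsTo_id _
  | cons i w ih => exact (mapsTo_Fmap hl i).comp ih

end Fmap

theorem dist_Fword_Fword_le {lam₁ lam₂ : ℝ} (h₁ : lam₁ ∈ Icc (0 : ℝ) (1 / 2))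
    (h₂ : lam₂ ∈ Icc (0 : ℝ) (1 / 2)) (w : List (Fin 4)) {x : E2} (hx : x ∈ circumdisk) :
    dist (Fword lam₁ w x) (Fword lam₂ w x) ≤ 2 * |lam₁ - lam₂| := by
  induction w with
  | nil => simp only [Fword, id, dist_self]; positivity
  | cons i w ih =>
    set y₁ := Fword lam₁ w x
    set y₂ := Fword lam₂ w x
    calc dist (Fmap lam₁ i y₁) (Fmap lam₂ i y₂)
        ≤ dist (Fmap lam₁ i y₁) (Fmap lam₁ i y₂) + dist (Fmap lam₁ i y₂) (Fmap lam₂ i y₂) :=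
          dist_triangle _ _ _
      _ ≤ dist y₁ y₂ / 2 + |lam₁ - lam₂| :=
          add_le_add (dist_Fmap_le h₁ i y₁ y₂)
            (dist_Fmap_Fmap_le lam₁ lam₂ i (mapsTo_Fword h₂ w hx))
      _ ≤ 2 * |lam₁ - lam₂| := by linarith

theorem stmt9_general (w : List (Fin 4)) (lam₁ lam₂ : ℝ)
    (h₁ : lam₁ ∈ Set.Ioo (0:ℝ) (1/2)) (h₂ : lam₂ ∈ Set.Ioo (0:ℝ) (1/2))
    (A : Set E2) (hsub : A ⊆ Tri) :
    Metric.hausdorffDist (Fword lam₁ w '' A) (Fword lam₂ w '' A) ≤ 2 * |lam₁ - lam₂| ∧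
    ∀ i : Fin 3, dist (Fword lam₁ w (pt i)) (Fword lam₂ w (pt i)) ≤ 2 * |lam₁ - lam₂| := by
  have key : ∀ x ∈ circumdisk, dist (Fword lam₁ w x) (Fword lam₂ w x) ≤ 2 * |lam₁ - lam₂| :=
    fun x hx => dist_Fword_Fword_le (Ioo_subset_Icc_self h₁) (Ioo_subset_Icc_self h₂) w hx
  exact ⟨hausdorffDist_image_le_of_dist_le (by positivity)
      fun x hx => key x (Tri_subset_circumdisk (hsub hx)),
    fun i => key (pt i) (pt_mem_circumdisk i)⟩

/-- For every word `w ∈ W_*`, all `λ₁, λ₂ ∈ (0,1/2)` and every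
nonempty closed `A ⊆ ▲`, the Hausdorff distance between `F_{w,λ₁}(A)` and
`F_{w,λ₂}(A)` is at most `2|λ₁ − λ₂|`; in particular
`dist (F_{w,λ₁}(pᵢ), F_{w,λ₂}(pᵢ)) ≤ 2|λ₁ − λ₂|` for `i = 1,2,3`. -/
theorem stmt9 (w : List (Fin 4)) (lam₁ lam₂ : ℝ)
    (h₁ : lam₁ ∈ Set.Ioo (0:ℝ) (1/2)) (h₂ : lam₂ ∈ Set.Ioo (0:ℝ) (1/2))
    (A : Set E2) (hne : A.Nonempty) (hcl : IsClosed A) (hsub : A ⊆ Tri) :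
    Metric.hausdorffDist (Fword lam₁ w '' A) (Fword lam₂ w '' A) ≤ 2 * |lam₁ - lam₂| ∧
    ∀ i : Fin 3, dist (Fword lam₁ w (pt i)) (Fword lam₂ w (pt i)) ≤ 2 * |lam₁ - lam₂| :=
  stmt9_general w lam₁ lam₂ h₁ h₂ A hsub
end
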